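/- Contractivity of the deterministic quantizer. Let b ≥ 1 be an integer, d ≥ 1, and let x ∈ ℝ^d with x ≠ 0. Set τ = 2‖x‖_∞/(2^b − 1), q(x)_i = ⌊(x_i + ‖x‖_∞)/τ + 1/2⌋ for each coordinate i, and C(x) = τ q(x) − ‖x‖_∞ 𝟙_d. Then ‖C(x) − x‖² ≤ (d/(2^b − 1)²) ‖x‖_∞² ≤ (d/(2^b − 1)²) ‖x‖². Consequently, if 2^b − 1 > √d (and with C(0) := 0), C is a δ-contractive compressor with δ = d/(2^b − 1)². -/

import Mathlib

/-! Every coordinate of `x + ‖x‖_∞ 𝟙` is rounded to the nearest point of the grid `τ ℤ`, so each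
coordinate of `C(x) - x` has absolute value at most `τ / 2 = ‖x‖_∞ / (2^b - 1)`; summing the `d`
squares gives the first bound, and `‖x‖_∞ ≤ ‖x‖` the second. If `2^b - 1 > √d` then
`δ = d / (2^b - 1)² < 1`. -/

noncomputable section

/-- The sup-norm `‖x‖_∞` of a vector in `ℝ^d`. -/
def infNorm {d : ℕ} (x : Fin d → ℝ) : ℝ := ⨆ i, |x i|

/-- The step size `τ = 2‖x‖_∞ / (2^b - 1)` of the deterministic quantizer. -/
def qStep (b : ℕ) {d : ℕ} (x : Fin d → ℝ) : ℝ := 2 * infNorm x / (2 ^ b - 1)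

/-- The deterministic `b`-bit quantizer `C(x) = τ q(x) - ‖x‖_∞ 𝟙`, where
`q(x)_i = ⌊(x_i + ‖x‖_∞)/τ + 1/2⌋`.  (It maps `0` to `0`.) -/
def detQuant (b : ℕ) {d : ℕ} (x : Fin d → ℝ) : Fin d → ℝ :=
  fun i => qStep b x * (⌊(x i + infNorm x) / qStep b x + 1 / 2⌋ : ℤ) - infNorm x

lemma abs_mul_round_div_sub_le {τ : ℝ} (hτ : 0 < τ) (y : ℝ) :
    |τ * round (y / τ) - y| ≤ τ / 2 := by
  have hy : τ * round (y / τ) - y = -τ * (y / τ - round (y / τ)) := by field_simp; ring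
  calc |τ * round (y / τ) - y| = τ * |y / τ - round (y / τ)| := by
        rw [hy, abs_mul, abs_neg, abs_of_pos hτ]
    _ ≤ τ * (1 / 2) := by gcongr; exact abs_sub_round _
    _ = τ / 2 := by ring

lemma two_pow_sub_one_pos {b : ℕ} (hb : b ≠ 0) : (0 : ℝ) < 2 ^ b - 1 :=
  sub_pos.2 <| mod_cast Nat.one_lt_two_pow hb

section infNorm

variable {d : ℕ} (x : Fin d → ℝ)

lemma infNorm_nonneg : 0 ≤ infNorm x :=
  Real.iSup_nonneg fun i => abs_nonneg (x i)

lemma abs_le_infNorm (i : Fin d) : |x i| ≤ infNorm x :=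
  le_ciSup (f := fun i => |x i|) (Set.finite_range _).bddAbove i

lemma infNorm_sq_le_sum_sq : infNorm x ^ 2 ≤ ∑ i, x i ^ 2 := by
  rcases isEmpty_or_nonempty (Fin d) with hd | hd
  · simp [infNorm]
  · obtain ⟨i, hi⟩ := exists_eq_ciSup_of_finite (f := fun i => |x i|)
    calc infNorm x ^ 2 = x i ^ 2 := by rw [infNorm, ← hi, sq_abs]
      _ ≤ ∑ j, x j ^ 2 := Finset.single_le_sum (fun j _ => sq_nonneg (x j)) (Finset.mem_univ i)

end infNorm

lemma detQuant_sub_apply_sq_le {b d : ℕ} (hb : b ≠ 0) (x : Fin d → ℝ) (i : Fin d) :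
    (detQuant b x i - x i) ^ 2 ≤ infNorm x ^ 2 / ((2 : ℝ) ^ b - 1) ^ 2 := by
  rcases (infNorm_nonneg x).eq_or_lt with hM | hM
  · -- then `x = 0` and `τ = 0`, and `detQuant` returns `0` because `y / 0 = 0` in Lean
    have hxi : x i = 0 := abs_nonpos_iff.1 (hM ▸ abs_le_infNorm x i)
    simp [detQuant, qStep, ← hM, hxi]
  have hτ : 0 < qStep b x := div_pos (by positivity) (two_pow_sub_one_pos hb)
  have herr : detQuant b x i - x i
      = qStep b x * round ((x i + infNorm x) / qStep b x) - (x i + infNorm x) := by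
    rw [detQuant, round_eq]; ring
  calc (detQuant b x i - x i) ^ 2 ≤ (qStep b x / 2) ^ 2 := by
        rw [herr, ← sq_abs]
        gcongr
        exact abs_mul_round_div_sub_le hτ _
    _ = infNorm x ^ 2 / ((2 : ℝ) ^ b - 1) ^ 2 := by rw [qStep]; field_simp

lemma sum_sq_detQuant_sub_le {b d : ℕ} (hb : b ≠ 0) (x : Fin d → ℝ) :
    ∑ i, (detQuant b x i - x i) ^ 2 ≤ (d / ((2 : ℝ) ^ b - 1) ^ 2) * infNorm x ^ 2 := by
  calc ∑ i, (detQuant b x i - x i) ^ 2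
      ≤ ∑ _i : Fin d, infNorm x ^ 2 / ((2 : ℝ) ^ b - 1) ^ 2 :=
        Finset.sum_le_sum fun i _ => detQuant_sub_apply_sq_le hb x i
    _ = (d / ((2 : ℝ) ^ b - 1) ^ 2) * infNorm x ^ 2 := by
        simp only [Finset.sum_const, Finset.card_univ, Fintype.card_fin, nsmul_eq_mul]; ring

theorem detQuant_contractive_general (b d : ℕ) (hb : 1 ≤ b)
    (x : Fin d → ℝ) :
    ((∑ i, (detQuant b x i - x i) ^ 2 ≤ (d / ((2 : ℝ) ^ b - 1) ^ 2) * infNorm x ^ 2) ∧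
      (d / ((2 : ℝ) ^ b - 1) ^ 2) * infNorm x ^ 2
        ≤ (d / ((2 : ℝ) ^ b - 1) ^ 2) * ∑ i, (x i) ^ 2) ∧
    (Real.sqrt d < 2 ^ b - 1 →
      0 ≤ (d : ℝ) / ((2 : ℝ) ^ b - 1) ^ 2 ∧
      (d : ℝ) / ((2 : ℝ) ^ b - 1) ^ 2 < 1 ∧
      ∀ z : Fin d → ℝ,
        ∑ i, (detQuant b z i - z i) ^ 2
          ≤ (d / ((2 : ℝ) ^ b - 1) ^ 2) * ∑ i, (z i) ^ 2) := by
  have hb₀ : b ≠ 0 := Nat.one_le_iff_ne_zero.1 hb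
  have hδ : (0 : ℝ) ≤ d / ((2 : ℝ) ^ b - 1) ^ 2 := by positivity
  have hcontr (z : Fin d → ℝ) :
      (d / ((2 : ℝ) ^ b - 1) ^ 2) * infNorm z ^ 2
        ≤ (d / ((2 : ℝ) ^ b - 1) ^ 2) * ∑ i, (z i) ^ 2 :=
    mul_le_mul_of_nonneg_left (infNorm_sq_le_sum_sq z) hδ
  refine ⟨⟨sum_sq_detQuant_sub_le hb₀ x, hcontr x⟩, fun hsqrt => ⟨hδ, ?_, fun z => ?_⟩⟩
  · have hpos := two_pow_sub_one_pos hb₀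
    exact (div_lt_one (by positivity)).2 ((Real.sqrt_lt' hpos).1 hsqrt)
  · exact (sum_sq_detQuant_sub_le hb₀ z).trans (hcontr z)

/-- **Contractivity of the deterministic quantizer.** For `x ≠ 0`,
`‖C(x) - x‖² ≤ (d/(2^b-1)²)‖x‖_∞² ≤ (d/(2^b-1)²)‖x‖²`; consequently, if `√d < 2^b - 1`,
the quantizer is a `δ`-contractive compressor with `δ = d/(2^b-1)²`. -/
theorem detQuant_contractive (b d : ℕ) (hb : 1 ≤ b) (hd : 1 ≤ d)
    (x : Fin d → ℝ) (hx : x ≠ 0) :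
    ((∑ i, (detQuant b x i - x i) ^ 2 ≤ (d / ((2 : ℝ) ^ b - 1) ^ 2) * infNorm x ^ 2) ∧
      (d / ((2 : ℝ) ^ b - 1) ^ 2) * infNorm x ^ 2
        ≤ (d / ((2 : ℝ) ^ b - 1) ^ 2) * ∑ i, (x i) ^ 2) ∧
    (Real.sqrt d < 2 ^ b - 1 →
      0 ≤ (d : ℝ) / ((2 : ℝ) ^ b - 1) ^ 2 ∧
      (d : ℝ) / ((2 : ℝ) ^ b - 1) ^ 2 < 1 ∧
      ∀ z : Fin d → ℝ,
        ∑ i, (detQuant b z i - z i) ^ 2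
          ≤ (d / ((2 : ℝ) ^ b - 1) ^ 2) * ∑ i, (z i) ^ 2) :=
  detQuant_contractive_general b d hb x
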